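/- Let R be a Hermitian trace-one operator on ℂ^N. Then there exist a unitary operator U on ℂ^N and a vector Ψ ∈ ℂ^N ⊗ ℂ^N such that R = U · Tr₂(|Ψ⟩⟨Ψ|), where Tr₂ denotes the partial trace over the second tensor factor, and moreover ‖Ψ‖² = ‖R‖₁ ≥ 1, where ‖R‖₁ = Tr√(R†R) is the trace norm. In particular, if ‖Ψ‖ > 1 for every such purification (equivalently ‖R‖₁ > 1), R is not positive semidefinite. -/

import Mathlib

open Matrix
open scoped ComplexOrder

/-- `|R| = √(Rᴴ R)`, the positive semidefinite absolute value of a matrix. -/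
noncomputable def absM {n : ℕ} (R : Matrix (Fin n) (Fin n) ℂ) :
    Matrix (Fin n) (Fin n) ℂ :=
  ((Matrix.posSemidef_conjTranspose_mul_self R).1.eigenvectorUnitary : Matrix (Fin n) (Fin n) ℂ) *
    diagonal ((RCLike.ofReal : ℝ → ℂ) ∘ Real.sqrt ∘ (Matrix.posSemidef_conjTranspose_mul_self R).1.eigenvalues) *
    (star (Matrix.posSemidef_conjTranspose_mul_self R).1.eigenvectorUnitary : Matrix (Fin n) (Fin n) ℂ)

/-- Partial trace over the second tensor factor of `ℂ^N ⊗ ℂ^N`. -/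
noncomputable def ptr₂ {N : ℕ}
    (M : Matrix (Fin N × Fin N) (Fin N × Fin N) ℂ) :
    Matrix (Fin N) (Fin N) ℂ :=
  fun a a' => ∑ b, M (a, b) (a', b)
/-! For Hermitian `R`, `|R| = √(RᴴR)` is `cfc |·| R`, and `U = cfc s R` with `s x = ±1` the sign
of `x` (taking `s 0 = 1`, so that `U² = 1`) is a self-adjoint unitary with `U |R| = R`.
Reading `Ψ` as the matrix `M a b = Ψ (a, b)` gives `Tr₂ |Ψ⟩⟨Ψ| = M Mᴴ` and `‖Ψ‖² = Tr (M Mᴴ)`;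
so `M = √|R|`, i.e. `Ψ = ∑ᵢ √|λᵢ| ψᵢ ⊗ ψ̄ᵢ`, purifies `|R|` with
`‖Ψ‖² = Tr |R| = ∑ᵢ |λᵢ| ≥ |∑ᵢ λᵢ| = 1`. If `R ≥ 0` then `|R| = R`, whose trace is `1`. -/

open scoped MatrixOrder

lemma absM_eq_cfcAbs {n : ℕ} (R : Matrix (Fin n) (Fin n) ℂ) : absM R = CFC.abs R := by
  have hRR := posSemidef_conjTranspose_mul_self R
  rw [CFC.abs, star_eq_conjTranspose, CFC.sqrt_eq_real_sqrt _ hRR.nonneg, cfcₙ_eq_cfc,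
    hRR.isHermitian.cfc_eq]
  rfl

namespace Matrix.IsHermitian

variable {n 𝕜 : Type*} [Fintype n] [DecidableEq n] [RCLike 𝕜] {A : Matrix n n 𝕜}

lemma trace_cfc (hA : A.IsHermitian) (f : ℝ → ℝ) :
    (cfc f A).trace = ∑ i, (f (hA.eigenvalues i) : 𝕜) := by
  rw [hA.cfc_eq, IsHermitian.cfc, Unitary.conjStarAlgAut_apply, trace_mul_cycle,
    Unitary.coe_star_mul_self, one_mul, trace_diagonal]
  rfl

lemma norm_trace_le_re_trace_cfcAbs (hA : A.IsHermitian) :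
    ‖A.trace‖ ≤ RCLike.re (CFC.abs A).trace := by
  rw [CFC.abs_eq_cfc_norm A hA, hA.trace_cfc, hA.trace_eq_sum_eigenvalues, ← RCLike.ofReal_sum,
    ← RCLike.ofReal_sum, RCLike.norm_ofReal, RCLike.ofReal_re]
  exact Finset.abs_sum_le_sum_abs _ _

lemma exists_unitary_mul_cfcAbs (hA : A.IsHermitian) :
    ∃ U ∈ unitaryGroup n 𝕜, A = U * CFC.abs A := by
  have hfin : (spectrum ℝ A).Finite :=
    hA.spectrum_real_eq_range_eigenvalues ▸ Set.finite_range _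
  let sgn : ℝ → ℝ := fun x => if 0 ≤ x then 1 else -1
  refine ⟨cfc sgn A, ?_, ?_⟩
  · rw [mem_unitaryGroup_iff, (cfc_predicate sgn A).star_eq,
      ← cfc_mul sgn sgn A (hfin.continuousOn _) (hfin.continuousOn _),
      cfc_congr (g := 1) fun x _ => by by_cases hx : 0 ≤ x <;> simp [sgn, hx], cfc_one ℝ A]
  · rw [CFC.abs_eq_cfc_norm A hA, ← cfc_mul sgn _ A (hfin.continuousOn _) (hfin.continuousOn _)]
    conv_lhs => rw [← cfc_id' ℝ A]
    refine cfc_congr fun x _ => ?_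
    by_cases hx : 0 ≤ x
    · simp [sgn, hx, abs_of_nonneg hx]
    · simp [sgn, hx, abs_of_neg (not_le.mp hx)]

end Matrix.IsHermitian

section PartialTrace

variable {N : ℕ}

lemma ptr₂_vecMulVec_star (Ψ : Fin N × Fin N → ℂ) :
    ptr₂ (vecMulVec Ψ (star Ψ)) = of (Function.curry Ψ) * (of (Function.curry Ψ))ᴴ := by
  ext a a'
  simp [ptr₂, vecMulVec_apply, mul_apply]

lemma re_trace_ptr₂_vecMulVec_star (Ψ : Fin N × Fin N → ℂ) :
    (ptr₂ (vecMulVec Ψ (star Ψ))).trace.re = ∑ x, ‖Ψ x‖ ^ 2 := by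
  simp [ptr₂, trace, vecMulVec_apply, Fintype.sum_prod_type, Complex.mul_conj,
    Complex.normSq_eq_norm_sq]
  norm_cast

lemma exists_ptr₂_vecMulVec_star_eq {P : Matrix (Fin N) (Fin N) ℂ} (hP : 0 ≤ P) :
    ∃ Ψ : Fin N × Fin N → ℂ, ptr₂ (vecMulVec Ψ (star Ψ)) = P := by
  refine ⟨fun p => CFC.sqrt P p.1 p.2, ?_⟩
  rw [ptr₂_vecMulVec_star]
  change CFC.sqrt P * (CFC.sqrt P)ᴴ = P
  rw [← star_eq_conjTranspose, (CFC.sqrt_nonneg P).isSelfAdjoint.star_eq,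
    CFC.sqrt_mul_sqrt_self P hP]

end PartialTrace

/-- space-time purification: every Hermitian trace-one `R` on
`ℂ^N` can be written as `R = U · Tr₂(|Ψ⟩⟨Ψ|)` for a unitary `U` and a vector
`Ψ ∈ ℂ^N ⊗ ℂ^N` with `‖Ψ‖² = ‖R‖₁ = Tr√(RᴴR) ≥ 1`; moreover if
`‖R‖₁ > 1` then `R` is not positive semidefinite. -/
theorem spacetime_purification
    (N : ℕ) (R : Matrix (Fin N) (Fin N) ℂ)
    (hR : R.IsHermitian) (hTr : R.trace = 1) :
    (∃ (U : Matrix (Fin N) (Fin N) ℂ) (_ : U ∈ Matrix.unitaryGroup (Fin N) ℂ)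
        (Ψ : Fin N × Fin N → ℂ),
      R = U * ptr₂ (vecMulVec Ψ (star Ψ)) ∧
      (∑ x, ‖Ψ x‖ ^ 2) = ((absM R).trace).re ∧
      1 ≤ ((absM R).trace).re) ∧
    (1 < ((absM R).trace).re → ¬R.PosSemidef) := by
  rw [absM_eq_cfcAbs]
  obtain ⟨U, hU, hRU⟩ := hR.exists_unitary_mul_cfcAbs
  obtain ⟨Ψ, hΨ⟩ := exists_ptr₂_vecMulVec_star_eq (CFC.abs_nonneg R)
  have h_one_le : 1 ≤ (CFC.abs R).trace.re := by
    simpa [hTr] using hR.norm_trace_le_re_trace_cfcAbs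
  refine ⟨⟨U, hU, Ψ, hΨ ▸ hRU, hΨ ▸ (re_trace_ptr₂_vecMulVec_star Ψ).symm, h_one_le⟩,
    fun h_gt hpsd => ?_⟩
  rw [CFC.abs_of_nonneg R hpsd.nonneg, hTr] at h_gt
  simp at h_gt
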